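/- arXiv:quant-ph/0302031 — 2 statements merged into one kernel-verified Lean document; each statement's English description precedes it below -/
import Mathlib

section
/- Let v_0 = (1,1,1)/√3, v_1 = (1,−1,−1)/√3, v_2 = (−1,1,−1)/√3, v_3 = (−1,−1,1)/√3 in ℂ^3, and let Φ be the tetrahedron channel Φ(ρ) = (3/4) Σ_{i=0}^3 |v_i⟩⟨v_i| · Tr(ρ |v_i⟩⟨v_i|) on 3×3 complex matrices. Then Φ is an extreme point of the set of EBT maps, and Φ is not a CQ map: there do not exist an orthonormal basis {f_k} of ℂ^3 and density matrices R_k with Φ(ρ) = Σ_k R_k · ⟨f_k, ρ f_k⟩ for all ρ. (Counterexample establishing Theorem 3, part D, for d = 3.) -/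
open Matrix Kronecker BigOperators ComplexOrder

noncomputable section

/-- Blockwise action of `I_n ⊗ Φ` on matrices indexed by `Fin n × Fin d`. -/
def tensorId (n : ℕ) {d e : ℕ}
    (Φ : Matrix (Fin d) (Fin d) ℂ → Matrix (Fin e) (Fin e) ℂ)
    (Γ : Matrix (Fin n × Fin d) (Fin n × Fin d) ℂ) :
    Matrix (Fin n × Fin e) (Fin n × Fin e) ℂ :=
  fun p q => Φ (fun a b => Γ (p.1, a) (q.1, b)) p.2 q.2

/-- A matrix indexed by `Fin n × Fin d` is separable if it is a finite sum of Kronecker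
products of positive semidefinite matrices. -/
def IsSeparableMat {n d : ℕ} (Γ : Matrix (Fin n × Fin d) (Fin n × Fin d) ℂ) : Prop :=
  ∃ (N : ℕ) (A : Fin N → Matrix (Fin n) (Fin n) ℂ)
    (B : Fin N → Matrix (Fin d) (Fin d) ℂ),
    (∀ i, (A i).PosSemidef) ∧ (∀ i, (B i).PosSemidef) ∧ Γ = ∑ i, (A i) ⊗ₖ (B i)

/-- A map on `d × d` matrices is entanglement breaking if `I_n ⊗ Φ` sends every
positive semidefinite matrix to a separable one. -/
def EntBreaking {d : ℕ} (Φ : Matrix (Fin d) (Fin d) ℂ → Matrix (Fin d) (Fin d) ℂ) : Prop :=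
  ∀ n : ℕ, 1 ≤ n → ∀ Γ : Matrix (Fin n × Fin d) (Fin n × Fin d) ℂ,
    Γ.PosSemidef → IsSeparableMat (tensorId n Φ Γ)

/-- Complete positivity: `I_n ⊗ Φ` preserves positive semidefiniteness for all `n ≥ 1`. -/
def CompletelyPositive {d e : ℕ}
    (Φ : Matrix (Fin d) (Fin d) ℂ → Matrix (Fin e) (Fin e) ℂ) : Prop :=
  ∀ n : ℕ, 1 ≤ n → ∀ Γ : Matrix (Fin n × Fin d) (Fin n × Fin d) ℂ,
    Γ.PosSemidef → (tensorId n Φ Γ).PosSemidef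

def TracePreserving {d : ℕ}
    (Φ : Matrix (Fin d) (Fin d) ℂ → Matrix (Fin d) (Fin d) ℂ) : Prop :=
  ∀ X, (Φ X).trace = X.trace

/-- The maximally entangled state `|β⟩⟨β|`. -/
def maxEnt (d : ℕ) : Matrix (Fin d × Fin d) (Fin d × Fin d) ℂ :=
  fun p q => if p.1 = p.2 ∧ q.1 = q.2 then (1 : ℂ) / d else 0

/-- The Choi matrix `(I_d ⊗ Φ)(|β⟩⟨β|)`. -/
def choiMatrix {d : ℕ} (Φ : Matrix (Fin d) (Fin d) ℂ → Matrix (Fin d) (Fin d) ℂ) :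
    Matrix (Fin d × Fin d) (Fin d × Fin d) ℂ :=
  tensorId d Φ (maxEnt d)

/-- The rank-one matrix `|v⟩⟨v|`. -/
def rankOne {d : ℕ} (v : Fin d → ℂ) : Matrix (Fin d) (Fin d) ℂ :=
  Matrix.vecMulVec v (star v)

/-- Completely positive trace-preserving (linear) maps. -/
def IsCPTP {d : ℕ} (Φ : Matrix (Fin d) (Fin d) ℂ → Matrix (Fin d) (Fin d) ℂ) : Prop :=
  IsLinearMap ℂ Φ ∧ CompletelyPositive Φ ∧ TracePreserving Φ

/-- EBT maps: completely positive, trace-preserving, entanglement-breaking linear maps. -/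
def IsEBT {d : ℕ} (Φ : Matrix (Fin d) (Fin d) ℂ → Matrix (Fin d) (Fin d) ℂ) : Prop :=
  IsCPTP Φ ∧ EntBreaking Φ

/-- `Φ` is an extreme point of the set of maps satisfying `P`. -/
def IsExtremePointOf {d : ℕ}
    (P : (Matrix (Fin d) (Fin d) ℂ → Matrix (Fin d) (Fin d) ℂ) → Prop)
    (Φ : Matrix (Fin d) (Fin d) ℂ → Matrix (Fin d) (Fin d) ℂ) : Prop :=
  P Φ ∧ ∀ Φ₁ Φ₂, P Φ₁ → P Φ₂ → ∀ a : ℝ, 0 < a → a < 1 →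
    Φ = (fun ρ => (a : ℂ) • Φ₁ ρ + ((1 - a : ℝ) : ℂ) • Φ₂ ρ) →
    Φ₁ = Φ ∧ Φ₂ = Φ

/-- The four tetrahedron vectors in `ℂ³`. -/
def tetra : Fin 4 → (Fin 3 → ℂ) :=
  fun i => (((Real.sqrt 3 : ℝ) : ℂ))⁻¹ •
    ![![1, 1, 1], ![1, -1, -1], ![-1, 1, -1], ![-1, -1, 1]] i

/-- The tetrahedron channel `Φ(ρ) = (3/4) ∑ i |v_i⟩⟨v_i| Tr(ρ |v_i⟩⟨v_i|)`. -/
def tetraChannel : Matrix (Fin 3) (Fin 3) ℂ → Matrix (Fin 3) (Fin 3) ℂ :=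
  fun ρ => (3 / 4 : ℂ) • ∑ i : Fin 4, ((ρ * rankOne (tetra i)).trace) • rankOne (tetra i)


namespace TetraProof

def u : Fin 4 → Fin 3 → ℂ := ![![1,1,1],![1,-1,-1],![-1,1,-1],![-1,-1,1]]

lemma u_conj (k : Fin 4) (i : Fin 3) : (starRingEnd ℂ) (u k i) = u k i := by
  fin_cases k <;> fin_cases i <;> norm_num [u, Matrix.cons_val_zero, Matrix.cons_val_one]

def Q (k : Fin 4) : Matrix (Fin 3) (Fin 3) ℂ := fun a b => u k a * u k b

def w (k : Fin 4) : Fin 3 × Fin 3 → ℂ := fun p => u k p.1 * u k p.2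

lemma w_conj (k : Fin 4) (p : Fin 3 × Fin 3) : (starRingEnd ℂ) (w k p) = w k p := by
  simp [w, _root_.map_mul, u_conj]

def W (k : Fin 4) : Matrix (Fin 3 × Fin 3) (Fin 3 × Fin 3) ℂ := fun p q => w k p * w k q

lemma sqrt3_sq : ((Real.sqrt 3 : ℝ) : ℂ)⁻¹ * ((Real.sqrt 3 : ℝ) : ℂ)⁻¹ = (3:ℂ)⁻¹ := by
  rw [← mul_inv, ← Complex.ofReal_mul, Real.mul_self_sqrt (by norm_num)]
  norm_num

lemma tetra_eq (k : Fin 4) : tetra k = (((Real.sqrt 3 : ℝ) : ℂ))⁻¹ • u k := rfl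

lemma rankOne_tetra (k : Fin 4) : rankOne (tetra k) = (3:ℂ)⁻¹ • Q k := by
  ext a b
  simp only [rankOne, tetra_eq, vecMulVec_apply, Pi.star_apply, Pi.smul_apply, smul_eq_mul,
    Matrix.smul_apply, Q, star_mul', Complex.star_def, map_inv₀, Complex.conj_ofReal, u_conj]
  linear_combination (u k a * u k b) * sqrt3_sq

lemma tetraChannel_eq (ρ : Matrix (Fin 3) (Fin 3) ℂ) :
    tetraChannel ρ = (12:ℂ)⁻¹ • ∑ k : Fin 4, ((ρ * Q k).trace • Q k) := by
  unfold tetraChannel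
  simp only [rankOne_tetra, Matrix.mul_smul, Matrix.trace_smul, smul_smul]
  ext a b
  simp only [Matrix.smul_apply, Matrix.sum_apply, smul_eq_mul, Finset.mul_sum]
  refine Finset.sum_congr rfl fun k _ => ?_
  ring


def rk1 {m : Type*} (v : m → ℂ) : Matrix m m ℂ := Matrix.vecMulVec v (star v)

lemma rankOne_eq_rk1 {d : ℕ} (v : Fin d → ℂ) : rankOne v = rk1 v := rfl

lemma rk1_psd {m : Type*} [Fintype m] (v : m → ℂ) : (rk1 v).PosSemidef := by
  refine Matrix.PosSemidef.of_dotProduct_mulVec_nonneg ?_ ?_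
  · ext i j
    simp only [conjTranspose_apply, rk1, vecMulVec_apply, Pi.star_apply, star_mul',
      star_star]
    ring
  · intro x
    have h1 : rk1 v *ᵥ x = (star v ⬝ᵥ x) • v := by
      ext i
      simp only [rk1, mulVec, dotProduct, vecMulVec_apply, Pi.star_apply, Pi.smul_apply,
        smul_eq_mul, Finset.sum_mul]
      exact Finset.sum_congr rfl fun j _ => by ring
    rw [h1, dotProduct_smul, smul_eq_mul]
    have h2 : star x ⬝ᵥ v = star (star v ⬝ᵥ x) := by
      simp only [dotProduct, star_sum, star_mul', star_star, Pi.star_apply]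
      exact Finset.sum_congr rfl fun j _ => by ring
    rw [h2, mul_comm]
    exact star_mul_self_nonneg _

lemma Q_eq_rk1 (k : Fin 4) : Q k = rk1 (u k) := by
  ext a b
  simp only [Q, rk1, vecMulVec_apply, Pi.star_apply, Complex.star_def, u_conj]

lemma Q_psd (k : Fin 4) : (Q k).PosSemidef := Q_eq_rk1 k ▸ rk1_psd (u k)

lemma W_eq_rk1 (k : Fin 4) : W k = rk1 (w k) := by
  ext p q
  simp only [W, rk1, vecMulVec_apply, Pi.star_apply, Complex.star_def, w_conj]

lemma W_psd (k : Fin 4) : (W k).PosSemidef := W_eq_rk1 k ▸ rk1_psd (w k)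

lemma ofReal_mul_nonneg {c : ℝ} (hc : 0 ≤ c) {z : ℂ} (hz : 0 ≤ z) : 0 ≤ (c : ℂ) * z := by
  have hz' : z = (z.re : ℂ) := Complex.eq_re_of_ofReal_le (by exact_mod_cast hz)
  rw [hz', ← Complex.ofReal_mul, Complex.zero_le_real]
  exact mul_nonneg hc (Complex.nonneg_iff.mp hz).1

lemma psd_real_smul {m : Type*} [Fintype m] {M : Matrix m m ℂ} (hM : M.PosSemidef)
    {c : ℝ} (hc : 0 ≤ c) : (((c : ℂ)) • M).PosSemidef := by
  refine Matrix.PosSemidef.of_dotProduct_mulVec_nonneg ?_ fun x => ?_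
  · unfold Matrix.IsHermitian
    rw [conjTranspose_smul, hM.1]
    congr 1
    simp [Complex.star_def, Complex.conj_ofReal]
  · rw [smul_mulVec, dotProduct_smul, smul_eq_mul]
    exact ofReal_mul_nonneg hc (hM.dotProduct_mulVec_nonneg x)

lemma kron_conjTranspose {m d : ℕ} (A : Matrix (Fin m) (Fin m) ℂ) (B : Matrix (Fin d) (Fin d) ℂ) :
    (A ⊗ₖ B)ᴴ = Aᴴ ⊗ₖ Bᴴ := by
  ext p q
  simp [conjTranspose_apply, star_mul']

open scoped MatrixOrder in
lemma psdH {m : Type*} [Fintype m] [DecidableEq m] (A : Matrix m m ℂ) :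
    A.PosSemidef ↔ ∃ B : Matrix m m ℂ, A = Bᴴ * B := by
  constructor
  · intro hA
    obtain ⟨B, hB⟩ := CStarAlgebra.nonneg_iff_eq_star_mul_self.mp hA.nonneg
    exact ⟨B, hB⟩
  · rintro ⟨B, rfl⟩
    exact posSemidef_conjTranspose_mul_self B

lemma kron_psd {m d : ℕ} {A : Matrix (Fin m) (Fin m) ℂ} {B : Matrix (Fin d) (Fin d) ℂ}
    (hA : A.PosSemidef) (hB : B.PosSemidef) : (A ⊗ₖ B).PosSemidef := by
  obtain ⟨C, rfl⟩ := (psdH _).mp hA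
  obtain ⟨D, rfl⟩ := (psdH _).mp hB
  rw [Matrix.mul_kronecker_mul, ← kron_conjTranspose]
  exact Matrix.posSemidef_conjTranspose_mul_self _

lemma psd_sum {m : Type*} [Fintype m] {ι : Type*} (s : Finset ι) (f : ι → Matrix m m ℂ)
    (h : ∀ i ∈ s, (f i).PosSemidef) : (∑ i ∈ s, f i).PosSemidef := by
  classical
  induction s using Finset.induction_on with
  | empty => simpa using Matrix.PosSemidef.zero
  | insert _ _ hnot ih =>
    rw [Finset.sum_insert hnot]
    exact (h _ (Finset.mem_insert_self _ _)).add
      (ih fun i hi => h i (Finset.mem_insert_of_mem hi))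

def Amat {n : ℕ} (Γ : Matrix (Fin n × Fin 3) (Fin n × Fin 3) ℂ) (k : Fin 4) :
    Matrix (Fin n) (Fin n) ℂ :=
  fun i j => ∑ a, ∑ b, u k a * Γ (i,a) (j,b) * u k b

lemma Amat_psd {n : ℕ} {Γ : Matrix (Fin n × Fin 3) (Fin n × Fin 3) ℂ} (hΓ : Γ.PosSemidef)
    (k : Fin 4) : (Amat Γ k).PosSemidef := by
  refine Matrix.PosSemidef.of_dotProduct_mulVec_nonneg ?_ ?_
  · ext i j
    simp only [conjTranspose_apply, Amat, star_sum, star_mul', Complex.star_def, u_conj]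
    rw [Finset.sum_comm]
    refine Finset.sum_congr rfl fun a _ => Finset.sum_congr rfl fun b _ => ?_
    rw [← hΓ.1.apply (i,a) (j,b)]
    simp only [Complex.star_def]
    ring
  · intro x
    have key : star x ⬝ᵥ (Amat Γ k) *ᵥ x
        = star (fun p : Fin n × Fin 3 => x p.1 * u k p.2) ⬝ᵥ
            Γ *ᵥ (fun p : Fin n × Fin 3 => x p.1 * u k p.2) := by
      simp only [dotProduct, mulVec, Amat, Fintype.sum_prod_type, Pi.star_apply, star_mul',
        Complex.star_def, u_conj, Finset.mul_sum, Finset.sum_mul]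
      refine Finset.sum_congr rfl fun i _ => ?_
      rw [Finset.sum_comm]
      refine Finset.sum_congr rfl fun a _ => ?_
      refine Finset.sum_congr rfl fun j _ => Finset.sum_congr rfl fun b _ => ?_
      ring
    rw [key]
    exact hΓ.dotProduct_mulVec_nonneg _

lemma trace_mul_Q (M : Matrix (Fin 3) (Fin 3) ℂ) (k : Fin 4) :
    (M * Q k).trace = ∑ a, ∑ b, u k a * M a b * u k b := by
  simp only [Matrix.trace, Matrix.diag, Matrix.mul_apply, Q]
  refine Finset.sum_congr rfl fun a _ => Finset.sum_congr rfl fun b _ => by ring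

lemma tensorId_tetra {n : ℕ} (Γ : Matrix (Fin n × Fin 3) (Fin n × Fin 3) ℂ) :
    tensorId n tetraChannel Γ = ∑ k : Fin 4, (Amat Γ k) ⊗ₖ ((12:ℂ)⁻¹ • Q k) := by
  ext ⟨i,a⟩ ⟨j,b⟩
  have h0 : tensorId n tetraChannel Γ (i,a) (j,b)
      = tetraChannel (fun a' b' => Γ (i,a') (j,b')) a b := rfl
  rw [h0, show tetraChannel (fun a' b' => Γ (i,a') (j,b')) = _ from tetraChannel_eq _]
  simp only [Matrix.smul_apply, Matrix.sum_apply, kroneckerMap_apply, smul_eq_mul,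
    Finset.mul_sum, trace_mul_Q, Amat]
  refine Finset.sum_congr rfl fun k _ => by erw [trace_mul_Q]; ring

lemma tetra_linear : IsLinearMap ℂ tetraChannel := by
  constructor
  · intro ρ σ
    unfold tetraChannel
    simp only [Matrix.add_mul, Matrix.trace_add, add_smul, Finset.sum_add_distrib, smul_add]
  · intro c ρ
    unfold tetraChannel
    ext a b
    simp only [Matrix.smul_mul, Matrix.trace_smul, Matrix.smul_apply, Matrix.sum_apply,
      smul_eq_mul, Finset.mul_sum]
    refine Finset.sum_congr rfl fun k _ => by ring

lemma sumQ : ∑ k : Fin 4, Q k = (4:ℂ) • 1 := by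
  ext a b
  fin_cases a <;> fin_cases b <;>
    simp [Q, u, Fin.sum_univ_four, Matrix.sum_apply, Matrix.smul_apply, Matrix.one_apply,
      -Matrix.cons_val'] <;> norm_num

lemma traceQ (k : Fin 4) : (Q k).trace = 3 := by
  fin_cases k <;> norm_num [Matrix.trace, Matrix.diag, Q, u, Fin.sum_univ_three,
    Matrix.vecHead, Matrix.vecTail, Matrix.cons_val_two]

lemma tetra_TP : TracePreserving tetraChannel := by
  intro ρ
  rw [tetraChannel_eq, Matrix.trace_smul, Matrix.trace_sum]
  simp only [Matrix.trace_smul, traceQ, smul_eq_mul]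
  have h4 : ∑ k : Fin 4, (ρ * Q k).trace = (4:ℂ) * ρ.trace := by
    rw [← Matrix.trace_sum, ← Matrix.mul_sum, sumQ, Matrix.mul_smul, Matrix.mul_one,
      Matrix.trace_smul, smul_eq_mul]
  calc (12:ℂ)⁻¹ • ∑ k : Fin 4, (ρ * Q k).trace * 3
      = (12:ℂ)⁻¹ * ((∑ k : Fin 4, (ρ * Q k).trace) * 3) := by
        rw [smul_eq_mul, Finset.sum_mul]
    _ = ρ.trace := by rw [h4]; ring

lemma Q12_psd (k : Fin 4) : (((12:ℂ))⁻¹ • Q k).PosSemidef := by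
  have h : ((12:ℂ))⁻¹ = (((12:ℝ)⁻¹ : ℝ) : ℂ) := by norm_num
  rw [h]
  exact psd_real_smul (Q_psd k) (by norm_num)

lemma tetra_CP : CompletelyPositive tetraChannel := by
  intro n hn Γ hΓ
  rw [tensorId_tetra]
  exact psd_sum _ _ fun k _ => kron_psd (Amat_psd hΓ k) (Q12_psd k)

lemma tetra_EB : EntBreaking tetraChannel := by
  intro n hn Γ hΓ
  exact ⟨4, fun k => Amat Γ k, fun k => (12:ℂ)⁻¹ • Q k,
    fun k => Amat_psd hΓ k, fun k => Q12_psd k, tensorId_tetra Γ⟩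

lemma tetra_EBT : IsEBT tetraChannel :=
  ⟨⟨tetra_linear, tetra_CP, tetra_TP⟩, tetra_EB⟩

lemma dot_sum {m ι : Type*} [Fintype m] [Fintype ι] (v : m → ℂ) (f : ι → m → ℂ) :
    v ⬝ᵥ (∑ l, f l) = ∑ l, v ⬝ᵥ f l := by
  simp only [dotProduct, Finset.sum_apply, Finset.mul_sum]
  exact Finset.sum_comm

lemma sum_dot {m ι : Type*} [Fintype m] [Fintype ι] (v : m → ℂ) (f : ι → m → ℂ) :
    (∑ l, f l) ⬝ᵥ v = ∑ l, f l ⬝ᵥ v := by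
  simp only [dotProduct, Finset.sum_apply, Finset.sum_mul]
  exact Finset.sum_comm

lemma maxEnt_psd : (maxEnt 3).PosSemidef := by
  have h : maxEnt 3 = rk1 (fun p : Fin 3 × Fin 3 =>
      if p.1 = p.2 then ((Real.sqrt 3 : ℝ) : ℂ)⁻¹ else 0) := by
    ext p q
    rcases p with ⟨p1, p2⟩; rcases q with ⟨q1, q2⟩
    by_cases h1 : p1 = p2 <;> by_cases h2 : q1 = q2 <;>
      simp only [maxEnt, rk1, vecMulVec_apply, Pi.star_apply, h1, h2, and_true, and_false,
        true_and, false_and, if_true, if_false, star_zero, mul_zero, zero_mul, ite_true,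
        ite_false] <;> try rfl
    rw [star_inv₀, Complex.star_def, Complex.conj_ofReal]
    rw [sqrt3_sq]
    norm_num
  rw [h]
  exact rk1_psd _

lemma choi_apply {Φ : Matrix (Fin 3) (Fin 3) ℂ → Matrix (Fin 3) (Fin 3) ℂ}
    (hΦ : IsLinearMap ℂ Φ) (i j a b : Fin 3) :
    choiMatrix Φ (i,a) (j,b) = (3:ℂ)⁻¹ * Φ (Matrix.single i j 1) a b := by
  have hM : (fun a' b' => maxEnt 3 (i,a') (j,b'))
      = ((3:ℂ)⁻¹ • Matrix.single i j (1:ℂ) : Matrix (Fin 3) (Fin 3) ℂ) := by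
    ext a' b'
    simp only [maxEnt, Matrix.smul_apply, Matrix.single, Matrix.of_apply, smul_eq_mul]
    by_cases h1 : i = a' <;> by_cases h2 : j = b' <;> simp [h1, h2] <;> norm_num
  have h0 : choiMatrix Φ (i,a) (j,b) = Φ (fun a' b' => maxEnt 3 (i,a') (j,b')) a b := rfl
  rw [h0, hM, hΦ.map_smul]
  simp

lemma eq_of_choi_eq {Φ Ψ : Matrix (Fin 3) (Fin 3) ℂ → Matrix (Fin 3) (Fin 3) ℂ}
    (hΦ : IsLinearMap ℂ Φ) (hΨ : IsLinearMap ℂ Ψ)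
    (h : choiMatrix Φ = choiMatrix Ψ) : Φ = Ψ := by
  have hE : ∀ i j : Fin 3, Φ (Matrix.single i j 1) = Ψ (Matrix.single i j 1) := by
    intro i j
    ext a b
    have h1 := choi_apply hΦ i j a b
    have h2 := choi_apply hΨ i j a b
    rw [h] at h1
    exact mul_left_cancel₀ (by norm_num : (3:ℂ)⁻¹ ≠ 0) (h1.symm.trans h2)
  funext ρ
  have hρ := Matrix.matrix_eq_sum_single ρ
  let F := IsLinearMap.mk' Φ hΦ
  let G := IsLinearMap.mk' Ψ hΨ
  have hF : Φ ρ = F (∑ i : Fin 3, ∑ j : Fin 3, Matrix.single i j (ρ i j)) := by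
    show Φ ρ = Φ _; rw [← hρ]
  have hG : Ψ ρ = G (∑ i : Fin 3, ∑ j : Fin 3, Matrix.single i j (ρ i j)) := by
    show Ψ ρ = Ψ _; rw [← hρ]
  rw [hF, hG, map_sum, map_sum]
  refine Finset.sum_congr rfl fun i _ => ?_
  rw [map_sum, map_sum]
  refine Finset.sum_congr rfl fun j _ => ?_
  have hsb : Matrix.single i j (ρ i j) = ρ i j • Matrix.single i j (1:ℂ) := by
    rw [Matrix.smul_single, smul_eq_mul, mul_one]
  rw [hsb, _root_.map_smul F, _root_.map_smul G]
  show ρ i j • Φ _ = ρ i j • Ψ _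
  rw [hE i j]

lemma trace_std_Q (i j : Fin 3) (k : Fin 4) :
    (Matrix.single i j (1:ℂ) * Q k).trace = u k j * u k i := by
  rw [trace_mul_Q]
  have h1 : ∀ a : Fin 3, (∑ b : Fin 3, u k a * Matrix.single i j (1:ℂ) a b * u k b)
      = if i = a then u k a * u k j else 0 := by
    intro a
    by_cases ha : i = a
    · subst ha
      rw [Finset.sum_eq_single j]
      · simp [Matrix.single]
      · intro b _ hb
        simp [Matrix.single, (Ne.symm hb)]
      · intro h; exact absurd (Finset.mem_univ j) h
    · simp [Matrix.single, ha]
  simp only [h1, Finset.sum_ite_eq, Finset.mem_univ, if_true]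
  ring

lemma choi_tetra : choiMatrix tetraChannel = ∑ k : Fin 4, (36:ℂ)⁻¹ • W k := by
  ext ⟨i,a⟩ ⟨j,b⟩
  rw [choi_apply tetra_linear, tetraChannel_eq]
  simp only [Matrix.smul_apply, Matrix.sum_apply, smul_eq_mul, Finset.mul_sum, trace_std_Q,
    W, w, Q]
  refine Finset.sum_congr rfl fun k _ => by ring

lemma gram (k l : Fin 4) : star (w k) ⬝ᵥ w l = if k = l then 9 else 1 := by
  have h : star (w k) ⬝ᵥ w l
      = (∑ i : Fin 3, u k i * u l i) * (∑ i : Fin 3, u k i * u l i) := by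
    simp only [dotProduct, Fintype.sum_prod_type, Pi.star_apply, w, star_mul',
      Complex.star_def, u_conj, Finset.sum_mul, Finset.mul_sum]
    refine Finset.sum_congr rfl fun i _ => Finset.sum_congr rfl fun a _ => by ring
  rw [h]
  fin_cases k <;> fin_cases l <;>
    norm_num [u, Fin.sum_univ_three, Fin.ext_iff, Matrix.vecHead, Matrix.vecTail,
      Matrix.cons_val_two]

def coeffs (y : Fin 3 × Fin 3 → ℂ) (k : Fin 4) : ℂ :=
  (8:ℂ)⁻¹ * ((star (w k) ⬝ᵥ y) - (∑ l : Fin 4, star (w l) ⬝ᵥ y) / 12)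

lemma sum_if_gram (c : Fin 4 → ℂ) (k : Fin 4) :
    ∑ l : Fin 4, c l * (if k = l then (9:ℂ) else 1) = 8 * c k + ∑ l : Fin 4, c l := by
  have h : ∀ l : Fin 4, c l * (if k = l then (9:ℂ) else 1)
      = (if k = l then 8 * c l else 0) + c l := by
    intro l
    by_cases h : k = l <;> simp [h] <;> ring
  simp only [h, Finset.sum_add_distrib, Finset.sum_ite_eq, Finset.mem_univ, if_true]

lemma coeffs_orth (y : Fin 3 × Fin 3 → ℂ) (k : Fin 4) :
    star (w k) ⬝ᵥ (y - ∑ l : Fin 4, coeffs y l • w l) = 0 := by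
  rw [dotProduct_sub, dot_sum]
  simp only [dotProduct_smul, smul_eq_mul, gram]
  rw [sum_if_gram]
  have hsum : ∑ l : Fin 4, coeffs y l = (∑ l : Fin 4, star (w l) ⬝ᵥ y) / 12 := by
    simp only [coeffs, Fin.sum_univ_four]
    ring
  rw [hsum]
  simp only [coeffs, Fin.sum_univ_four]
  ring

lemma span_of_orth (y : Fin 3 × Fin 3 → ℂ)
    (hy : ∀ x : Fin 3 × Fin 3 → ℂ, (∀ k, star (w k) ⬝ᵥ x = 0) → star y ⬝ᵥ x = 0) :
    ∃ c : Fin 4 → ℂ, y = ∑ k : Fin 4, c k • w k := by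
  refine ⟨coeffs y, ?_⟩
  have h0 : star (y - ∑ l : Fin 4, coeffs y l • w l) ⬝ᵥ
      (y - ∑ l : Fin 4, coeffs y l • w l) = 0 := by
    have h1 : star y ⬝ᵥ (y - ∑ l : Fin 4, coeffs y l • w l) = 0 :=
      hy _ (fun k => coeffs_orth y k)
    have h2 : star (y - ∑ l : Fin 4, coeffs y l • w l) ⬝ᵥ
          (y - ∑ l : Fin 4, coeffs y l • w l)
        = star y ⬝ᵥ (y - ∑ l : Fin 4, coeffs y l • w l)
          - ∑ l : Fin 4, star (coeffs y l)
              * (star (w l) ⬝ᵥ (y - ∑ l' : Fin 4, coeffs y l' • w l')) := by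
      rw [star_sub, sub_dotProduct, star_sum]
      congr 1
      rw [sum_dot]
      refine Finset.sum_congr rfl fun l _ => ?_
      rw [star_smul, smul_dotProduct, smul_eq_mul]
    rw [h2, h1, zero_sub, neg_eq_zero]
    exact Finset.sum_eq_zero fun l _ => by rw [coeffs_orth, mul_zero]
  have hz0 := dotProduct_star_self_eq_zero.mp h0
  exact (sub_eq_zero.mp hz0)

lemma u00 : u 0 0 = 1 := rfl
lemma u01 : u 0 1 = 1 := rfl
lemma u02 : u 0 2 = 1 := rfl
lemma u10 : u 1 0 = 1 := rfl
lemma u11 : u 1 1 = -1 := rfl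
lemma u12 : u 1 2 = -1 := rfl
lemma u20 : u 2 0 = -1 := rfl
lemma u21 : u 2 1 = 1 := rfl
lemma u22 : u 2 2 = -1 := rfl
lemma u30 : u 3 0 = -1 := rfl
lemma u31 : u 3 1 = -1 := rfl
lemma u32 : u 3 2 = 1 := rfl

lemma prod_in_span (g h : Fin 3 → ℂ) (c : Fin 4 → ℂ)
    (hc : ∀ p : Fin 3 × Fin 3, g p.1 * h p.2 = ∑ k : Fin 4, c k * w k p) :
    ∃ (k : Fin 4) (μ : ℂ), ∀ p : Fin 3 × Fin 3, g p.1 * h p.2 = μ * w k p := by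
  have hc' : ∀ i a : Fin 3, g i * h a
      = c 0 * (u 0 i * u 0 a) + c 1 * (u 1 i * u 1 a) + c 2 * (u 2 i * u 2 a)
        + c 3 * (u 3 i * u 3 a) := by
    intro i a
    have t := hc (i, a)
    rw [Fin.sum_univ_four] at t
    simpa only [w] using t
  have E00 : g 0 * h 0 = c 0 + c 1 + c 2 + c 3 := by
    have t := hc' 0 0; rw [u00, u10, u20, u30] at t; linear_combination t
  have E11 : g 1 * h 1 = c 0 + c 1 + c 2 + c 3 := by
    have t := hc' 1 1; rw [u01, u11, u21, u31] at t; linear_combination t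
  have E22 : g 2 * h 2 = c 0 + c 1 + c 2 + c 3 := by
    have t := hc' 2 2; rw [u02, u12, u22, u32] at t; linear_combination t
  have E01 : g 0 * h 1 = c 0 - c 1 - c 2 + c 3 := by
    have t := hc' 0 1; rw [u00, u01, u10, u11, u20, u21, u30, u31] at t; linear_combination t
  have E10 : g 1 * h 0 = c 0 - c 1 - c 2 + c 3 := by
    have t := hc' 1 0; rw [u00, u01, u10, u11, u20, u21, u30, u31] at t; linear_combination t
  have E02 : g 0 * h 2 = c 0 - c 1 + c 2 - c 3 := by
    have t := hc' 0 2; rw [u00, u02, u10, u12, u20, u22, u30, u32] at t; linear_combination t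
  have E20 : g 2 * h 0 = c 0 - c 1 + c 2 - c 3 := by
    have t := hc' 2 0; rw [u00, u02, u10, u12, u20, u22, u30, u32] at t; linear_combination t
  have E12 : g 1 * h 2 = c 0 + c 1 - c 2 - c 3 := by
    have t := hc' 1 2; rw [u01, u02, u11, u12, u21, u22, u31, u32] at t; linear_combination t
  have E21 : g 2 * h 1 = c 0 + c 1 - c 2 - c 3 := by
    have t := hc' 2 1; rw [u01, u02, u11, u12, u21, u22, u31, u32] at t; linear_combination t
  set S := c 0 + c 1 + c 2 + c 3 with hS_def
  set P := c 0 - c 1 - c 2 + c 3 with hP_def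
  set Qq := c 0 - c 1 + c 2 - c 3 with hQ_def
  set Rr := c 0 + c 1 - c 2 - c 3 with hR_def
  have eP : P * P = S * S := by
    linear_combination (-P) * E01 + (-(g 0 * h 1)) * E10 + S * E00 + (g 0 * h 0) * E11
  have eQ : Qq * Qq = S * S := by
    linear_combination (-Qq) * E02 + (-(g 0 * h 2)) * E20 + S * E00 + (g 0 * h 0) * E22
  have eR : Rr * Rr = S * S := by
    linear_combination (-Rr) * E12 + (-(g 1 * h 2)) * E21 + S * E11 + (g 1 * h 1) * E22
  have eSR : S * Rr = P * Qq := by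
    linear_combination (-(g 2 * h 1)) * E00 + (-S) * E21 + (g 2 * h 0) * E01 + P * E20
  by_cases hS : S = 0
  · have hP : P = 0 := by
      have h := eP; rw [hS, mul_zero] at h; exact mul_self_eq_zero.mp h
    have hQ : Qq = 0 := by
      have h := eQ; rw [hS, mul_zero] at h; exact mul_self_eq_zero.mp h
    have hR : Rr = 0 := by
      have h := eR; rw [hS, mul_zero] at h; exact mul_self_eq_zero.mp h
    have h0 : c 0 = 0 := by linear_combination (hS + hP + hQ + hR) / 4
    have h1 : c 1 = 0 := by linear_combination (hS - hP - hQ + hR) / 4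
    have h2 : c 2 = 0 := by linear_combination (hS - hP + hQ - hR) / 4
    have h3 : c 3 = 0 := by linear_combination (hS + hP - hQ - hR) / 4
    exact ⟨0, 0, fun p => by rw [hc p, Fin.sum_univ_four, h0, h1, h2, h3]; ring⟩
  · rcases mul_self_eq_mul_self_iff.mp eP with hP | hP <;>
      rcases mul_self_eq_mul_self_iff.mp eQ with hQ | hQ
    · -- P = S, Q = S, R = S ⇒ k = 0
      have hR : Rr = S := mul_left_cancel₀ hS (by rw [eSR, hP, hQ]; try ring)
      have h1 : c 1 = 0 := by linear_combination (-(1/4:ℂ)) * hP + (-(1/4:ℂ)) * hQ + (1/4:ℂ) * hR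
      have h2 : c 2 = 0 := by linear_combination (-(1/4:ℂ)) * hP + (1/4:ℂ) * hQ + (-(1/4:ℂ)) * hR
      have h3 : c 3 = 0 := by linear_combination (1/4:ℂ) * hP + (-(1/4:ℂ)) * hQ + (-(1/4:ℂ)) * hR
      exact ⟨0, c 0, fun p => by rw [hc p, Fin.sum_univ_four, h1, h2, h3]; ring⟩
    · -- P = S, Q = -S ⇒ R = -S, k = 3
      have hR : Rr = -S := mul_left_cancel₀ hS (by rw [eSR, hP, hQ]; try ring)
      have h0 : c 0 = 0 := by linear_combination (1/4:ℂ) * hP + (1/4:ℂ) * hQ + (1/4:ℂ) * hR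
      have h1 : c 1 = 0 := by linear_combination (-(1/4:ℂ)) * hP + (-(1/4:ℂ)) * hQ + (1/4:ℂ) * hR
      have h2 : c 2 = 0 := by linear_combination (-(1/4:ℂ)) * hP + (1/4:ℂ) * hQ + (-(1/4:ℂ)) * hR
      exact ⟨3, c 3, fun p => by rw [hc p, Fin.sum_univ_four, h0, h1, h2]; ring⟩
    · -- P = -S, Q = S ⇒ R = -S, k = 2
      have hR : Rr = -S := mul_left_cancel₀ hS (by rw [eSR, hP, hQ]; try ring)
      have h0 : c 0 = 0 := by linear_combination (1/4:ℂ) * hP + (1/4:ℂ) * hQ + (1/4:ℂ) * hR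
      have h1 : c 1 = 0 := by linear_combination (-(1/4:ℂ)) * hP + (-(1/4:ℂ)) * hQ + (1/4:ℂ) * hR
      have h3 : c 3 = 0 := by linear_combination (1/4:ℂ) * hP + (-(1/4:ℂ)) * hQ + (-(1/4:ℂ)) * hR
      exact ⟨2, c 2, fun p => by rw [hc p, Fin.sum_univ_four, h0, h1, h3]; ring⟩
    · -- P = -S, Q = -S ⇒ R = S, k = 1
      have hR : Rr = S := mul_left_cancel₀ hS (by rw [eSR, hP, hQ]; try ring)
      have h0 : c 0 = 0 := by linear_combination (1/4:ℂ) * hP + (1/4:ℂ) * hQ + (1/4:ℂ) * hR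
      have h2 : c 2 = 0 := by linear_combination (-(1/4:ℂ)) * hP + (1/4:ℂ) * hQ + (-(1/4:ℂ)) * hR
      have h3 : c 3 = 0 := by linear_combination (1/4:ℂ) * hP + (-(1/4:ℂ)) * hQ + (-(1/4:ℂ)) * hR
      exact ⟨1, c 1, fun p => by rw [hc p, Fin.sum_univ_four, h0, h2, h3]; ring⟩

lemma W_mulVec (k : Fin 4) (x : Fin 3 × Fin 3 → ℂ) (hx : star (w k) ⬝ᵥ x = 0) :
    W k *ᵥ x = 0 := by
  have hx' : ∑ q : Fin 3 × Fin 3, w k q * x q = 0 := by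
    rw [← hx]
    exact Finset.sum_congr rfl fun q _ => by
      simp [Pi.star_apply, Complex.star_def, w_conj]
  ext p
  calc (W k *ᵥ x) p = ∑ q : Fin 3 × Fin 3, w k p * (w k q * x q) := by
        simp only [W, mulVec, dotProduct]
        exact Finset.sum_congr rfl fun q _ => by ring
    _ = w k p * ∑ q : Fin 3 × Fin 3, w k q * x q := by rw [Finset.mul_sum]
    _ = 0 := by rw [hx', mul_zero]

lemma choi_tetra_mulVec (x : Fin 3 × Fin 3 → ℂ) (hx : ∀ k, star (w k) ⬝ᵥ x = 0) :
    choiMatrix tetraChannel *ᵥ x = 0 := by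
  rw [choi_tetra]
  have hsum : (∑ k : Fin 4, (36:ℂ)⁻¹ • W k) *ᵥ x = ∑ k : Fin 4, (36:ℂ)⁻¹ • (W k *ᵥ x) := by
    ext p
    simp only [mulVec, dotProduct, Matrix.sum_apply, Matrix.smul_apply, Finset.sum_apply,
      Pi.smul_apply, smul_eq_mul, Finset.sum_mul, Finset.mul_sum]
    rw [Finset.sum_comm]
    exact Finset.sum_congr rfl fun k _ => Finset.sum_congr rfl fun q _ => by ring
  rw [hsum]
  refine Finset.sum_eq_zero fun k _ => ?_
  rw [W_mulVec k x (hx k), smul_zero]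

lemma choi_eq (Ψ : Matrix (Fin 3) (Fin 3) ℂ → Matrix (Fin 3) (Fin 3) ℂ) (hΨ : IsEBT Ψ)
    (a : ℝ) (ha : 0 < a)
    (hdom : (choiMatrix tetraChannel - (a:ℂ) • choiMatrix Ψ).PosSemidef) :
    choiMatrix Ψ = choiMatrix tetraChannel := by
  obtain ⟨N, A, B, hA, hB, hsum0⟩ := hΨ.2 3 (by norm_num) (maxEnt 3) maxEnt_psd
  have hsum : choiMatrix Ψ = ∑ i : Fin N, (A i) ⊗ₖ (B i) := hsum0
  have hpsd : (choiMatrix Ψ).PosSemidef := hΨ.1.2.1 3 (by norm_num) _ maxEnt_psd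
  choose C hC using fun m => (psdH _).mp (hA m)
  choose D hD using fun m => (psdH _).mp (hB m)
  -- kernel property
  have hker : ∀ x : Fin 3 × Fin 3 → ℂ, (∀ k, star (w k) ⬝ᵥ x = 0) →
      ∀ m, (C m ⊗ₖ D m) *ᵥ x = 0 := by
    intro x hx m
    have hΦx := choi_tetra_mulVec x hx
    have h1 : star x ⬝ᵥ (choiMatrix Ψ *ᵥ x) = 0 := by
      have hd := hdom.dotProduct_mulVec_nonneg x
      rw [sub_mulVec, dotProduct_sub, hΦx, dotProduct_zero, smul_mulVec,
        dotProduct_smul, smul_eq_mul] at hd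
      have hnn : 0 ≤ star x ⬝ᵥ (choiMatrix Ψ *ᵥ x) := hpsd.dotProduct_mulVec_nonneg x
      have h2 : (a:ℂ) * (star x ⬝ᵥ (choiMatrix Ψ *ᵥ x)) ≤ 0 :=
        neg_nonneg.mp (by rwa [zero_sub] at hd)
      have h3 : 0 ≤ (a:ℂ) * (star x ⬝ᵥ (choiMatrix Ψ *ᵥ x)) :=
        ofReal_mul_nonneg ha.le hnn
      have h4 : (a:ℂ) * (star x ⬝ᵥ (choiMatrix Ψ *ᵥ x)) = 0 := le_antisymm h2 h3
      rcases mul_eq_zero.mp h4 with h5 | h5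
      · exact absurd h5 (Complex.ofReal_ne_zero.mpr ha.ne')
      · exact h5
    have hexp : star x ⬝ᵥ (choiMatrix Ψ *ᵥ x)
        = ∑ m, star x ⬝ᵥ ((A m ⊗ₖ B m) *ᵥ x) := by
      rw [hsum]
      have hmv : (∑ m, A m ⊗ₖ B m) *ᵥ x = ∑ m, (A m ⊗ₖ B m) *ᵥ x := by
        ext p
        simp only [mulVec, dotProduct, Matrix.sum_apply, Finset.sum_apply, Finset.sum_mul]
        exact Finset.sum_comm
      rw [hmv, dot_sum]
    have h2 : star x ⬝ᵥ ((A m ⊗ₖ B m) *ᵥ x) = 0 := by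
      have hnn : ∀ m' ∈ Finset.univ, (0:ℂ) ≤ star x ⬝ᵥ ((A m' ⊗ₖ B m') *ᵥ x) :=
        fun m' _ => (kron_psd (hA m') (hB m')).dotProduct_mulVec_nonneg x
      exact (Finset.sum_eq_zero_iff_of_nonneg hnn).mp (hexp ▸ h1) m (Finset.mem_univ m)
    have h3 : star ((C m ⊗ₖ D m) *ᵥ x) ⬝ᵥ ((C m ⊗ₖ D m) *ᵥ x) = 0 := by
      rw [hC m, hD m, Matrix.mul_kronecker_mul, ← kron_conjTranspose] at h2
      rwa [← Matrix.mulVec_mulVec, dotProduct_mulVec, vecMul_conjTranspose, star_star] at h2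
    exact dotProduct_star_self_eq_zero.mp h3
  -- classification of the product rows
  have hclass : ∀ m (r s : Fin 3), ∃ (k : Fin 4) (μ : ℂ),
      ∀ p : Fin 3 × Fin 3, star (C m r p.1) * star (D m s p.2) = μ * w k p := by
    intro m r s
    have horth : ∀ x : Fin 3 × Fin 3 → ℂ, (∀ k, star (w k) ⬝ᵥ x = 0) →
        star (fun p : Fin 3 × Fin 3 => star (C m r p.1) * star (D m s p.2)) ⬝ᵥ x = 0 := by
      intro x hx
      have hE : star (fun p : Fin 3 × Fin 3 => star (C m r p.1) * star (D m s p.2)) ⬝ᵥ x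
          = ((C m ⊗ₖ D m) *ᵥ x) (r, s) := by
        simp only [mulVec, dotProduct, kroneckerMap_apply, Pi.star_apply, star_mul', star_star]
        try exact Finset.sum_congr rfl fun q _ => by ring
      rw [hE, hker x hx m]
      try rfl
    obtain ⟨c, hcc⟩ := span_of_orth _ horth
    exact prod_in_span (fun i => star (C m r i)) (fun b => star (D m s b)) c fun p => by
      have := congrFun hcc p
      simpa only [Finset.sum_apply, Pi.smul_apply, smul_eq_mul] using this
  choose K M hKM using hclass
  -- representation of the Choi matrix of Ψ
  have hrep : choiMatrix Ψ = ∑ l : Fin 4,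
      (∑ m, ∑ r : Fin 3, ∑ s : Fin 3,
        if K m r s = l then M m r s * star (M m r s) else 0) • W l := by
    rw [hsum]
    ext p q
    have hterm : ∀ m (r s : Fin 3),
        (star (C m r p.1) * C m r q.1) * (star (D m s p.2) * D m s q.2)
          = (M m r s * star (M m r s)) * W (K m r s) p q := by
      intro m r s
      have e1 := hKM m r s p
      have e2' : C m r q.1 * D m s q.2 = star (M m r s) * w (K m r s) q := by
        have e2 := congrArg star (hKM m r s q)
        simp only [star_mul', star_star] at e2
        rw [e2]
        simp [Pi.star_apply, Complex.star_def, w_conj, mul_comm]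
      calc (star (C m r p.1) * C m r q.1) * (star (D m s p.2) * D m s q.2)
          = (star (C m r p.1) * star (D m s p.2)) * (C m r q.1 * D m s q.2) := by ring
        _ = (M m r s * w (K m r s) p) * (star (M m r s) * w (K m r s) q) := by rw [e1, e2']
        _ = (M m r s * star (M m r s)) * W (K m r s) p q := by simp only [W]; ring
    have hL : ∀ m, (A m ⊗ₖ B m) p q
        = ∑ r : Fin 3, ∑ s : Fin 3, (M m r s * star (M m r s)) * W (K m r s) p q := by
      intro m
      rw [hC m, hD m]
      simp only [kroneckerMap_apply, Matrix.mul_apply, conjTranspose_apply]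
      rw [Finset.sum_mul_sum]
      exact Finset.sum_congr rfl fun r _ => Finset.sum_congr rfl fun s _ => hterm m r s
    simp only [Matrix.sum_apply, Matrix.smul_apply, smul_eq_mul, Finset.sum_mul]
    conv_rhs => rw [Finset.sum_comm]
    refine Finset.sum_congr rfl fun m _ => ?_
    rw [hL m]
    conv_rhs => rw [Finset.sum_comm]
    refine Finset.sum_congr rfl fun r _ => ?_
    conv_rhs => rw [Finset.sum_comm]
    refine Finset.sum_congr rfl fun s _ => ?_
    simp only [ite_mul, zero_mul, Finset.sum_ite_eq, Finset.mem_univ, if_true]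
  -- trace preservation pins down the coefficients
  set t : Fin 4 → ℂ := fun l => ∑ m, ∑ r : Fin 3, ∑ s : Fin 3,
      if K m r s = l then M m r s * star (M m r s) else 0 with ht_def
  have hpt : ∀ i j : Fin 3, ∑ x : Fin 3, choiMatrix Ψ (i,x) (j,x)
      = (3:ℂ)⁻¹ * (if i = j then 1 else 0) := by
    intro i j
    have hca : ∀ x : Fin 3, choiMatrix Ψ (i,x) (j,x)
        = (3:ℂ)⁻¹ * Ψ (Matrix.single i j 1) x x := fun x => choi_apply hΨ.1.1 i j x x
    rw [Finset.sum_congr rfl fun x _ => hca x, ← Finset.mul_sum]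
    congr 1
    have htr : ∑ x : Fin 3, Ψ (Matrix.single i j 1) x x
        = (Ψ (Matrix.single i j 1)).trace := rfl
    rw [htr, hΨ.1.2.2]
    by_cases hij : i = j
    · subst hij
      simp [Matrix.trace, Matrix.diag, Matrix.single]
    · rw [if_neg hij]
      refine Finset.sum_eq_zero fun x _ => ?_
      simp only [Matrix.single, Matrix.of_apply, Matrix.diag]
      rw [if_neg]
      rintro ⟨rfl, rfl⟩
      exact hij rfl
  have hpt2 : ∀ i j : Fin 3, ∑ x : Fin 3, choiMatrix Ψ (i,x) (j,x)
      = 3 * ∑ l : Fin 4, t l * (u l i * u l j) := by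
    intro i j
    rw [hrep]
    simp only [Matrix.sum_apply, Matrix.smul_apply, smul_eq_mul, W, w]
    rw [Finset.sum_comm, Finset.mul_sum]
    refine Finset.sum_congr rfl fun l _ => ?_
    have hsq : ∀ x : Fin 3, u l x * u l x = 1 := by
      intro x; fin_cases l <;> fin_cases x <;> norm_num [u]
    have hre : ∀ x : Fin 3, t l * (u l i * u l x * (u l j * u l x))
        = t l * (u l i * u l j) * (u l x * u l x) := fun x => by ring
    calc ∑ x : Fin 3, t l * (u l i * u l x * (u l j * u l x))
        = ∑ x : Fin 3, t l * (u l i * u l j) * (u l x * u l x) :=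
          Finset.sum_congr rfl fun x _ => hre x
      _ = ∑ _x : Fin 3, t l * (u l i * u l j) :=
          Finset.sum_congr rfl fun x _ => by rw [hsq x, mul_one]
      _ = 3 * (t l * (u l i * u l j)) := by
          simp only [Finset.sum_const, Finset.card_univ, Fintype.card_fin, nsmul_eq_mul]
          push_cast
          ring
  have key : ∀ i j : Fin 3, 3 * ∑ l : Fin 4, t l * (u l i * u l j)
      = (3:ℂ)⁻¹ * (if i = j then 1 else 0) := fun i j => (hpt2 i j).symm.trans (hpt i j)
  have e00 := key 0 0
  have e01 := key 0 1
  have e02 := key 0 2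
  have e12 := key 1 2
  rw [Fin.sum_univ_four] at e00 e01 e02 e12
  rw [u00, u10, u20, u30] at e00
  rw [u00, u01, u10, u11, u20, u21, u30, u31] at e01
  rw [u00, u02, u10, u12, u20, u22, u30, u32] at e02
  rw [u01, u02, u11, u12, u21, u22, u31, u32] at e12
  simp only [Fin.reduceEq, reduceIte, ite_true, ite_false] at e00 e01 e02 e12
  have ht0 : t 0 = (36:ℂ)⁻¹ := by linear_combination (e00 + e01 + e02 + e12) / 12
  have ht1 : t 1 = (36:ℂ)⁻¹ := by linear_combination (e00 - e01 - e02 + e12) / 12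
  have ht2 : t 2 = (36:ℂ)⁻¹ := by linear_combination (e00 - e01 + e02 - e12) / 12
  have ht3 : t 3 = (36:ℂ)⁻¹ := by linear_combination (e00 + e01 - e02 - e12) / 12
  rw [hrep, choi_tetra]
  rw [Fin.sum_univ_four, Fin.sum_univ_four]
  rw [show (∑ m, ∑ r : Fin 3, ∑ s : Fin 3,
      if K m r s = 0 then M m r s * star (M m r s) else 0) = t 0 from rfl,
    show (∑ m, ∑ r : Fin 3, ∑ s : Fin 3,
      if K m r s = 1 then M m r s * star (M m r s) else 0) = t 1 from rfl,
    show (∑ m, ∑ r : Fin 3, ∑ s : Fin 3,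
      if K m r s = 2 then M m r s * star (M m r s) else 0) = t 2 from rfl,
    show (∑ m, ∑ r : Fin 3, ∑ s : Fin 3,
      if K m r s = 3 then M m r s * star (M m r s) else 0) = t 3 from rfl,
    ht0, ht1, ht2, ht3]

lemma trQQ (m k : Fin 4) : (Q m * Q k).trace = if m = k then 9 else 1 := by
  have h : (Q m * Q k).trace
      = (∑ a : Fin 3, u m a * u k a) * (∑ a : Fin 3, u m a * u k a) := by
    rw [trace_mul_Q, Finset.sum_mul_sum]
    exact Finset.sum_congr rfl fun a _ => Finset.sum_congr rfl fun b _ => by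
      simp only [Q]; ring
  rw [h]
  fin_cases m <;> fin_cases k <;>
    norm_num [u, Fin.sum_univ_three, Fin.ext_iff, Matrix.vecHead, Matrix.vecTail,
      Matrix.cons_val_two]

lemma hval (m : Fin 4) (i j : Fin 3) : (tetraChannel (rankOne (tetra m))) i j
    = (12:ℂ)⁻¹ * ∑ k : Fin 4, ((3:ℂ)⁻¹ * (if m = k then (9:ℂ) else 1)) * Q k i j := by
  rw [rankOne_tetra m, tetraChannel_eq]
  simp only [Matrix.smul_mul, Matrix.trace_smul, smul_eq_mul, Matrix.smul_apply,
    Matrix.sum_apply, trQQ]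
  try congr 1
  try exact Finset.sum_congr rfl fun k _ => by ring

lemma tetra_li : LinearIndependent ℂ (fun m : Fin 4 => tetraChannel (rankOne (tetra m))) := by
  rw [Fintype.linearIndependent_iff]
  intro c hcsum
  have hentry : ∀ i j : Fin 3,
      ∑ m : Fin 4, c m * (tetraChannel (rankOne (tetra m))) i j = 0 := by
    intro i j
    have h := congrFun (congrFun hcsum i) j
    simpa only [Matrix.sum_apply, Matrix.smul_apply, smul_eq_mul, Matrix.zero_apply] using h
  have E1 : c 0 + c 1 + c 2 + c 3 = 0 := by
    have tt := hentry 0 0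
    rw [Fin.sum_univ_four] at tt
    simp only [hval, Fin.sum_univ_four, Q, u00, u01, u02, u10, u11, u12, u20, u21, u22,
      u30, u31, u32, Fin.reduceEq, reduceIte, ite_true, ite_false] at tt
    linear_combination 3 * tt
  have E2 : c 0 - c 1 - c 2 + c 3 = 0 := by
    have tt := hentry 0 1
    rw [Fin.sum_univ_four] at tt
    simp only [hval, Fin.sum_univ_four, Q, u00, u01, u02, u10, u11, u12, u20, u21, u22,
      u30, u31, u32, Fin.reduceEq, reduceIte, ite_true, ite_false] at tt
    linear_combination (9/2 : ℂ) * tt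
  have E3 : c 0 - c 1 + c 2 - c 3 = 0 := by
    have tt := hentry 0 2
    rw [Fin.sum_univ_four] at tt
    simp only [hval, Fin.sum_univ_four, Q, u00, u01, u02, u10, u11, u12, u20, u21, u22,
      u30, u31, u32, Fin.reduceEq, reduceIte, ite_true, ite_false] at tt
    linear_combination (9/2 : ℂ) * tt
  have E4 : c 0 + c 1 - c 2 - c 3 = 0 := by
    have tt := hentry 1 2
    rw [Fin.sum_univ_four] at tt
    simp only [hval, Fin.sum_univ_four, Q, u00, u01, u02, u10, u11, u12, u20, u21, u22,
      u30, u31, u32, Fin.reduceEq, reduceIte, ite_true, ite_false] at tt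
    linear_combination (9/2 : ℂ) * tt
  have h0 : c 0 = 0 := by linear_combination (E1 + E2 + E3 + E4) / 4
  have h1 : c 1 = 0 := by linear_combination (E1 - E2 - E3 + E4) / 4
  have h2 : c 2 = 0 := by linear_combination (E1 - E2 + E3 - E4) / 4
  have h3 : c 3 = 0 := by linear_combination (E1 + E2 - E3 - E4) / 4
  intro m
  fin_cases m <;> assumption

end TetraProof

open TetraProof in
theorem tetrahedron_channel_extreme_ebt_not_cq' :
    IsExtremePointOf IsEBT tetraChannel ∧
    ¬ ∃ (f : Fin 3 → (Fin 3 → ℂ)) (R : Fin 3 → Matrix (Fin 3) (Fin 3) ℂ),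
        (∀ j k, star (f j) ⬝ᵥ f k = if j = k then 1 else 0) ∧
        (∀ k, (R k).PosSemidef ∧ (R k).trace = 1) ∧
        ∀ ρ, tetraChannel ρ = ∑ k, (star (f k) ⬝ᵥ ρ *ᵥ f k) • R k := by
  constructor
  · refine ⟨tetra_EBT, ?_⟩
    intro Φ₁ Φ₂ h1 h2 a ha0 ha1 heq
    have hchoi : ∀ p q : Fin 3 × Fin 3, choiMatrix tetraChannel p q
        = (a:ℂ) * choiMatrix Φ₁ p q + ((1-a:ℝ):ℂ) * choiMatrix Φ₂ p q := by
      intro p q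
      show tetraChannel _ p.2 q.2 = _
      rw [heq]
      rfl
    have hpsd1 : (choiMatrix Φ₁).PosSemidef := h1.1.2.1 3 (by norm_num) _ maxEnt_psd
    have hpsd2 : (choiMatrix Φ₂).PosSemidef := h2.1.2.1 3 (by norm_num) _ maxEnt_psd
    have hM1 : choiMatrix tetraChannel - (a:ℂ) • choiMatrix Φ₁
        = ((1-a:ℝ):ℂ) • choiMatrix Φ₂ := by
      ext p q
      simp only [Matrix.sub_apply, Matrix.smul_apply, smul_eq_mul, hchoi p q]
      ring
    have hM2 : choiMatrix tetraChannel - ((1-a:ℝ):ℂ) • choiMatrix Φ₂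
        = (a:ℂ) • choiMatrix Φ₁ := by
      ext p q
      simp only [Matrix.sub_apply, Matrix.smul_apply, smul_eq_mul, hchoi p q]
      ring
    have hc1 : choiMatrix Φ₁ = choiMatrix tetraChannel :=
      choi_eq Φ₁ h1 a ha0 (by rw [hM1]; exact psd_real_smul hpsd2 (by linarith))
    have hc2 : choiMatrix Φ₂ = choiMatrix tetraChannel :=
      choi_eq Φ₂ h2 (1-a) (by linarith) (by rw [hM2]; exact psd_real_smul hpsd1 ha0.le)
    exact ⟨eq_of_choi_eq h1.1.1 tetra_linear hc1,
      eq_of_choi_eq h2.1.1 tetra_linear hc2⟩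
  · rintro ⟨f, R, hf, hR, hEq⟩
    classical
    set Sp := Submodule.span ℂ (Set.range R) with hSp
    haveI : FiniteDimensional ℂ Sp := FiniteDimensional.span_of_finite ℂ (Set.finite_range R)
    have hmem : ∀ m : Fin 4, tetraChannel (rankOne (tetra m)) ∈ Sp := by
      intro m
      rw [hEq (rankOne (tetra m))]
      exact Submodule.sum_mem _ fun k _ =>
        Submodule.smul_mem _ _ (Submodule.subset_span ⟨k, rfl⟩)
    have hli2 : LinearIndependent ℂ (fun m : Fin 4 =>
        (⟨tetraChannel (rankOne (tetra m)), hmem m⟩ : Sp)) := by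
      apply LinearIndependent.of_comp Sp.subtype
      exact tetra_li
    have h4 : 4 ≤ Module.finrank ℂ Sp := by
      simpa using hli2.fintype_card_le_finrank
    have h3 : Module.finrank ℂ Sp ≤ 3 := by
      have hcard := finrank_span_le_card (R := ℂ) (Set.range R)
      refine hcard.trans ?_
      rw [Set.toFinset_range]
      exact (Finset.card_image_le).trans (by simp)
    omega


/-- counterexample for Theorem 3, part D, `d = 3`: the tetrahedron
channel is an extreme point of the set of EBT maps, but is not a CQ map. -/
theorem tetrahedron_channel_extreme_ebt_not_cq :
    IsExtremePointOf IsEBT tetraChannel ∧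
    ¬ ∃ (f : Fin 3 → (Fin 3 → ℂ)) (R : Fin 3 → Matrix (Fin 3) (Fin 3) ℂ),
        (∀ j k, star (f j) ⬝ᵥ f k = if j = k then 1 else 0) ∧
        (∀ k, (R k).PosSemidef ∧ (R k).trace = 1) ∧
        ∀ ρ, tetraChannel ρ = ∑ k, (star (f k) ⬝ᵥ ρ *ᵥ f k) • R k :=
  tetrahedron_channel_extreme_ebt_not_cq'
end
end

section
/- Let v_0 = (1,1,1)/√3, v_1 = (1,−1,−1)/√3, v_2 = (−1,1,−1)/√3, v_3 = (−1,−1,1)/√3 in ℂ^3, and let Φ be the tetrahedron channel Φ(ρ) = (3/4) Σ_{i=0}^3 |v_i⟩⟨v_i| · Tr(ρ |v_i⟩⟨v_i|) on 3×3 complex matrices. Then Φ is not an extreme point of the set of completely positive trace-preserving maps on 3×3 complex matrices. -/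
open Matrix Kronecker BigOperators ComplexOrder

noncomputable section

-- helpers
lemma psd_add {n : Type*} [Fintype n] {A B : Matrix n n ℂ}
    (hA : A.PosSemidef) (hB : B.PosSemidef) : (A + B).PosSemidef := by
  refine ⟨hA.1.add hB.1, fun x => ?_⟩
  simpa [mul_add, add_mul] using add_nonneg (hA.2 x) (hB.2 x)

lemma psd_smul {n : Type*} [Fintype n] {A : Matrix n n ℂ} (hA : A.PosSemidef)
    {c : ℝ} (hc : 0 ≤ c) : ((c : ℂ) • A).PosSemidef := by
  refine ⟨?_, fun x => ?_⟩
  · show ((c:ℂ) • A)ᴴ = _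
    rw [conjTranspose_smul, hA.1.eq, Complex.star_def, Complex.conj_ofReal]
  · exact (hA.smul (a := (c : ℂ)) (by exact_mod_cast hc)).2 x

lemma psd_sum {n : Type*} [Fintype n] {m : ℕ} (A : Fin m → Matrix n n ℂ)
    (hA : ∀ k, (A k).PosSemidef) : (∑ k, A k).PosSemidef := by
  classical
  refine Finset.sum_induction A Matrix.PosSemidef (fun a b ha hb => psd_add ha hb)
    Matrix.PosSemidef.zero (fun k _ => hA k)

lemma kraus_cp {d m : ℕ} (w : Fin m → ℝ) (hw : ∀ k, 0 ≤ w k)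
    (K : Fin m → Matrix (Fin d) (Fin d) ℂ) :
    CompletelyPositive (fun ρ => ∑ k, (w k : ℂ) • (K k * ρ * (K k)ᴴ)) := by
  intro n hn Γ hΓ
  have hrep : tensorId n (fun ρ => ∑ k, (w k : ℂ) • (K k * ρ * (K k)ᴴ)) Γ
      = ∑ k, (w k : ℂ) • (((1 : Matrix (Fin n) (Fin n) ℂ) ⊗ₖ K k) * Γ *
          ((1 : Matrix (Fin n) (Fin n) ℂ) ⊗ₖ K k)ᴴ) := by
    ext ⟨p, i⟩ ⟨q, j⟩
    simp only [tensorId, Matrix.sum_apply, Matrix.smul_apply]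
    refine Finset.sum_congr rfl fun k _ => ?_
    congr 1
    simp [Matrix.mul_apply, conjTranspose_apply, kroneckerMap_apply, one_apply,
      Fintype.sum_prod_type, ite_mul, mul_ite, apply_ite star, star_mul', star_one,
      star_zero, Finset.sum_ite_eq, Finset.sum_ite_eq',
      Finset.sum_mul, Finset.mul_sum]
    exact Finset.sum_congr rfl fun x _ => by rw [← Finset.sum_mul]; rfl
  rw [hrep]
  exact psd_sum _ fun k => psd_smul (hΓ.mul_mul_conjTranspose_same _) (hw k)

def tetraS : Fin 4 → Matrix (Fin 3) (Fin 3) ℂ :=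
  ![!![0,1,0;1,0,0;0,0,0], !![0,0,1;0,0,0;1,0,0], !![0,0,0;0,0,1;0,1,0], 1]

def tetraW1 : Fin 4 → ℝ := ![1/2, 1/2, 1/2, 0]
def tetraW2 : Fin 4 → ℝ := ![1/6, 1/6, 1/6, 2/3]

def tetraPhi1 : Matrix (Fin 3) (Fin 3) ℂ → Matrix (Fin 3) (Fin 3) ℂ :=
  fun ρ => ∑ k, (tetraW1 k : ℂ) • (tetraS k * ρ * (tetraS k)ᴴ)

def tetraPhi2 : Matrix (Fin 3) (Fin 3) ℂ → Matrix (Fin 3) (Fin 3) ℂ :=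
  fun ρ => ∑ k, (tetraW2 k : ℂ) • (tetraS k * ρ * (tetraS k)ᴴ)

lemma tetraS_herm : ∀ k, (tetraS k)ᴴ = tetraS k := by
  intro k
  fin_cases k <;> ext i j <;> fin_cases i <;> fin_cases j <;>
    simp [tetraS, Matrix.conjTranspose_apply, Matrix.one_apply, Matrix.vecHead, Matrix.vecTail]

lemma kraus_lin {d m : ℕ} (w : Fin m → ℝ) (K : Fin m → Matrix (Fin d) (Fin d) ℂ) :
    IsLinearMap ℂ (fun ρ => ∑ k, (w k : ℂ) • (K k * ρ * (K k)ᴴ)) := by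
  constructor
  · intro x y
    simp [Matrix.mul_add, Matrix.add_mul, smul_add, Finset.sum_add_distrib]
  · intro c x
    simp [Matrix.mul_smul, Matrix.smul_mul, Finset.smul_sum, smul_comm c]

lemma tetraPhi1_cptp : IsCPTP tetraPhi1 := by
  refine ⟨kraus_lin _ _, kraus_cp _ (by intro k; fin_cases k <;> norm_num [tetraW1]) _, ?_⟩
  intro X
  simp [tetraPhi1, tetraW1, tetraS, Matrix.trace, Matrix.diag, Matrix.mul_apply,
    Matrix.sum_apply, Matrix.smul_apply, Fin.sum_univ_three, Fin.sum_univ_four,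
    Matrix.conjTranspose_apply, Matrix.one_apply, Matrix.vecHead, Matrix.vecTail]
  ring

lemma tetraPhi2_cptp : IsCPTP tetraPhi2 := by
  refine ⟨kraus_lin _ _, kraus_cp _ (by intro k; fin_cases k <;> norm_num [tetraW2]) _, ?_⟩
  intro X
  simp [tetraPhi2, tetraW2, tetraS, Matrix.trace, Matrix.diag, Matrix.mul_apply,
    Matrix.sum_apply, Matrix.smul_apply, Fin.sum_univ_three, Fin.sum_univ_four,
    Matrix.conjTranspose_apply, Matrix.one_apply, Matrix.vecHead, Matrix.vecTail]
  ring

def tetraU : Fin 4 → Matrix (Fin 3) (Fin 3) ℂ :=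
  ![!![1,1,1;1,1,1;1,1,1], !![1,-1,-1;-1,1,1;-1,1,1],
    !![1,-1,1;-1,1,-1;1,-1,1], !![1,1,-1;1,1,-1;-1,-1,1]]

lemma rankOne_tetra : ∀ i : Fin 4, rankOne (tetra i) = (3 : ℂ)⁻¹ • tetraU i := by
  have hs : (((Real.sqrt 3 : ℝ) : ℂ))⁻¹ * (((Real.sqrt 3 : ℝ) : ℂ))⁻¹ = (3 : ℂ)⁻¹ := by
    rw [← mul_inv, ← Complex.ofReal_mul, Real.mul_self_sqrt (by norm_num)]
    norm_num
  intro i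
  fin_cases i <;> ext a b <;> fin_cases a <;> fin_cases b <;>
    (simp [rankOne, tetra, tetraU, Matrix.vecMulVec_apply, Pi.smul_apply, smul_eq_mul,
      Complex.star_def, _root_.map_mul, map_inv₀, Complex.conj_ofReal,
      Matrix.vecHead, Matrix.vecTail] <;>
     first
       | linear_combination hs
       | linear_combination -hs
       | norm_num)

set_option maxHeartbeats 2000000 in
lemma tetra_decomp : tetraChannel = (fun ρ =>
    (((1:ℝ)/2 : ℝ) : ℂ) • tetraPhi1 ρ + ((1 - (1:ℝ)/2 : ℝ) : ℂ) • tetraPhi2 ρ) := by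
  funext ρ
  ext a b
  simp only [tetraChannel, rankOne_tetra]
  fin_cases a <;> fin_cases b <;>
    (simp [tetraPhi1, tetraPhi2, tetraW1, tetraW2, tetraS, tetraU, Matrix.trace,
      Matrix.diag, Matrix.mul_apply, Matrix.sum_apply, Matrix.smul_apply,
      Matrix.add_apply, Fin.sum_univ_three, Fin.sum_univ_four,
      Matrix.conjTranspose_apply, Matrix.one_apply, Matrix.vecHead, Matrix.vecTail,
      Matrix.vecMul, dotProduct] <;> ring)

/-- the tetrahedron channel is not an extreme point of the set of CPT
maps on `3 × 3` matrices. -/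
theorem tetrahedron_channel_not_extreme_in_cptp :
    ¬ IsExtremePointOf IsCPTP tetraChannel := by
  rintro ⟨-, hext⟩
  obtain ⟨h1, h2⟩ := hext tetraPhi1 tetraPhi2 tetraPhi1_cptp tetraPhi2_cptp
    ((1:ℝ)/2) (by norm_num) (by norm_num) tetra_decomp
  have h12 : tetraPhi1 = tetraPhi2 := h1.trans h2.symm
  have := congrFun (congrFun (congrFun h12 !![0,1,0;0,0,0;0,0,0]) 0) 1
  simp [tetraPhi1, tetraPhi2, tetraW1, tetraW2, tetraS, Matrix.mul_apply,
    Matrix.sum_apply, Matrix.smul_apply, Fin.sum_univ_three, Fin.sum_univ_four,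
    Matrix.conjTranspose_apply, Matrix.one_apply, Matrix.vecHead, Matrix.vecTail] at this
  norm_num at this
end
end
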